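/- arXiv:1307.6886 — 4 statements merged into one kernel-verified Lean document; each statement's English description precedes it below -/
import Mathlib

section
/- Let 𝒞 be a category and x an object of 𝒞 such that 𝒞 is strongly connected at x, i.e. for every object y of 𝒞 there exist a morphism x ⟶ y and a morphism y ⟶ x. Let L : 𝒞 ⥤ 𝒟 be a localization functor of 𝒞 with respect to the class of all morphisms (so L sends every morphism of 𝒞 to an isomorphism and is universal with this property). Then the canonical map from endomorphisms of x to automorphisms of L(x) has image generating the whole automorphism group: the subgroup of Aut(L(x)) generated by the set of automorphisms arising as L(f) for endomorphisms f : x ⟶ x in 𝒞 is all of Aut(L(x)). -/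
/-!
Every morphism `φ : L x ⟶ L y` of the localization is a zigzag of maps `L f` and inverses
`(L w)⁻¹`. By induction on the zigzag, `φ ≫ L p` lies in the subgroup for every `p : y ⟶ x`.
A forward step is absorbed into `p`. For a backward step along `w : y ⟶ z`, strong
connectedness gives `i : x ⟶ y` and `q : z ⟶ x`, and
`φ ≫ (L w)⁻¹ ≫ L p = (φ ≫ L q) ≫ L (i ≫ w ≫ q)⁻¹ ≫ L (i ≫ p)`,
where the first factor is in the subgroup by induction and the others come from `End x`.
-/

open CategoryTheory Localization

namespace CategoryTheory

lemma Aut.exists_mem_hom_comp {D : Type*} [Category D] {X : D} (H : Subgroup (Aut X))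
    {g g' : X ⟶ X} (hg : ∃ a ∈ H, a.hom = g) (hg' : ∃ a ∈ H, a.hom = g') :
    ∃ a ∈ H, a.hom = g ≫ g' := by
  obtain ⟨a, ha, rfl⟩ := hg
  obtain ⟨b, hb, rfl⟩ := hg'
  exact ⟨b * a, mul_mem hb ha, rfl⟩

namespace Localization

variable {C D : Type*} [Category C] [Category D] (L : C ⥤ D) [L.IsLocalization ⊤] {x : C}
  {H : Subgroup (Aut (L.obj x))} (hH : ∀ f : x ⟶ x, ∃ a ∈ H, a.hom = L.map f)
include hH

lemma exists_mem_hom_eq_isoOfHom_inv_comp_map {y : C} (i : x ⟶ y) (w p : y ⟶ x) :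
    ∃ a ∈ H, a.hom = (isoOfHom L ⊤ w trivial).inv ≫ L.map p := by
  obtain ⟨a, ha, ha'⟩ := hH (i ≫ w)
  obtain ⟨b, hb, hb'⟩ := hH (i ≫ p)
  refine ⟨b * a⁻¹, mul_mem hb (inv_mem ha), (Iso.inv_comp_eq (α := a)).2 ?_⟩
  rw [ha', hb', L.map_comp, L.map_comp, Category.assoc, isoOfHom_hom_inv_id_assoc]

lemma exists_mem_hom_eq_comp_map (hsc : ∀ y : C, Nonempty (x ⟶ y) ∧ Nonempty (y ⟶ x))
    (φ : StructuredArrow (L.obj x) L) (p : φ.right ⟶ x) :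
    ∃ a ∈ H, a.hom = φ.hom ≫ L.map p := by
  induction φ using induction_structuredArrow L ⊤ with
  | hP₀ => simpa using hH p
  | hP₁ f φ hφ => simpa [L.map_comp] using hφ (f ≫ p)
  | hP₂ w _ φ hφ =>
    obtain ⟨⟨i⟩, -⟩ := hsc _
    obtain ⟨-, ⟨q⟩⟩ := hsc _
    have hq : L.map q ≫ (isoOfHom L ⊤ (w ≫ q) trivial).inv = (isoOfHom L ⊤ w trivial).inv := by
      rw [Iso.comp_inv_eq, isoOfHom_hom, L.map_comp, isoOfHom_inv_hom_id_assoc]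
    simpa only [StructuredArrow.mk_hom_eq_self, Category.assoc, reassoc_of% hq] using Aut.exists_mem_hom_comp H (hφ q)
      (exists_mem_hom_eq_isoOfHom_inv_comp_map L hH i (w ≫ q) p)

theorem subgroup_eq_top_of_forall_exists_mem_hom_eq_map
    (hsc : ∀ y : C, Nonempty (x ⟶ y) ∧ Nonempty (y ⟶ x)) : H = ⊤ := by
  refine eq_top_iff.2 fun a _ => ?_
  obtain ⟨b, hb, hba⟩ := exists_mem_hom_eq_comp_map L hH hsc (StructuredArrow.mk a.hom) (𝟙 x)
  rwa [show a = b from Aut.ext (by simpa using hba.symm)]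

end Localization

end CategoryTheory

/-- Proposition 3.2: if `𝒞` is strongly connected at `x` and `L : 𝒞 ⥤ 𝒟` is a localization
of `𝒞` at the class of all morphisms, then the automorphisms of `L(x)` coming from
endomorphisms of `x` in `𝒞` generate the whole group `Aut (L(x))`. -/
theorem strongly_connected_endomorphisms_generate_aut_of_localization
    {C : Type*} {D : Type*} [Category C] [Category D] (x : C)
    (hsc : ∀ y : C, Nonempty (x ⟶ y) ∧ Nonempty (y ⟶ x))
    (L : C ⥤ D) [L.IsLocalization ⊤] :
    Subgroup.closure {a : Aut (L.obj x) | ∃ f : x ⟶ x, a.hom = L.map f} = ⊤ :=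
  subgroup_eq_top_of_forall_exists_mem_hom_eq_map L
    (fun f => ⟨isoOfHom L ⊤ f trivial, Subgroup.subset_closure ⟨f, rfl⟩, rfl⟩) hsc
end

section
/- Let M be the quotient of the additive commutative monoid ℕ × ℕ × (ZMod 2) (componentwise addition) by the additive monoid congruence generated by the relations (g, k, 0) ∼ (0, 2g + k, 1) for all g ∈ ℕ and all k ≥ 1. Then there is a well-defined additive monoid homomorphism φ : M →+ ℤ sending the class of (g, k, ε) to 2g + k, and φ is a group completion of M: for every additive commutative group G and every additive monoid homomorphism f : M →+ G there exists a unique additive group homomorphism h : ℤ →+ G with h ∘ φ = f. In particular the group completion (Grothendieck group) of M is isomorphic to ℤ. -/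
universe u

/-- The relation `(g, k, 0) ∼ (0, 2g + k, 1)` for `k ≥ 1` on `ℕ × ℕ × ZMod 2`. -/
def nOneRel : (ℕ × ℕ × ZMod 2) → (ℕ × ℕ × ZMod 2) → Prop := fun a b =>
  ∃ g k : ℕ, 1 ≤ k ∧ a = (g, k, (0 : ZMod 2)) ∧ b = (0, 2 * g + k, (1 : ZMod 2))

/-- The additive monoid congruence on `ℕ × ℕ × ZMod 2` generated by `nOneRel`. -/
def nOneCon : AddCon (ℕ × ℕ × ZMod 2) := addConGen nOneRel

/-- The monoid `𝒩₁` of the paper: the quotient of `ℕ × ℕ × ZMod 2` by the congruence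
generated by `(g, k, 0) ∼ (0, 2g + k, 1)` for `k ≥ 1`. -/
def NOne : Type := nOneCon.Quotient

noncomputable instance : AddCommMonoid NOne := by
  unfold NOne; infer_instance

/-! In a group the relation for `(g, k) = (0, 1)` kills the twist `(0, 0, 1)`, and the one for
`(g, k) = (1, 1)` then makes a handle worth two crosscaps. So a homomorphism from `𝒩₁` to a group
is determined by its value on a crosscap, which `2g + k` sends to the generator `1` of `ℤ`. -/

namespace NOne

/-- `2g + k` is minus the Euler characteristic of the cobordism with `g` handles and
`k` crosscaps. -/
def negEulerChar₀ : (ℕ × ℕ × ZMod 2) →+ ℤ where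
  toFun p := 2 * p.1 + p.2.1
  map_zero' := rfl
  map_add' a b := by
    simp only [Prod.fst_add, Prod.snd_add, Nat.cast_add]
    ring

lemma nOneCon_le_ker_negEulerChar₀ : nOneCon ≤ AddCon.ker negEulerChar₀ :=
  AddCon.addConGen_le.mpr <| by
    rintro _ _ ⟨g, k, -, rfl, rfl⟩
    change 2 * (g : ℤ) + k = 2 * 0 + ((2 * g + k : ℕ) : ℤ)
    push_cast
    ring

def negEulerChar : NOne →+ ℤ := nOneCon.lift negEulerChar₀ nOneCon_le_ker_negEulerChar₀

def mk : (ℕ × ℕ × ZMod 2) →+ NOne := nOneCon.mk'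

lemma negEulerChar_mk (g k : ℕ) (ε : ZMod 2) : negEulerChar (mk (g, k, ε)) = 2 * (g : ℤ) + k :=
  rfl

lemma mk_surjective : Function.Surjective mk := AddCon.mk'_surjective

lemma mk_eq_mk_of_one_le (g k : ℕ) (hk : 1 ≤ k) : mk (g, k, 0) = mk (0, 2 * g + k, 1) :=
  nOneCon.eq.mpr <| AddConGen.Rel.of _ _ ⟨g, k, hk, rfl, rfl⟩

noncomputable def handle : NOne := mk (1, 0, 0)

noncomputable def crosscap : NOne := mk (0, 1, 0)

noncomputable def twist : NOne := mk (0, 0, 1)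

lemma negEulerChar_crosscap : negEulerChar crosscap = 1 := rfl

lemma mk_eq_nsmul_add (g k : ℕ) (ε : ZMod 2) :
    mk (g, k, ε) = g • handle + k • crosscap + ε.val • twist := by
  simp only [handle, crosscap, twist, ← map_nsmul, ← map_add]
  congr 1
  ext <;> simp

lemma crosscap_add_twist : crosscap + twist = crosscap := by
  simpa [crosscap, twist, ← map_add] using (mk_eq_mk_of_one_le 0 1 le_rfl).symm

lemma handle_add_crosscap : handle + crosscap = 3 • crosscap + twist := by
  simpa [handle, crosscap, twist, ← map_add, ← map_nsmul] using mk_eq_mk_of_one_le 1 1 le_rfl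

variable {G : Type*} [AddCommGroup G] (f : NOne →+ G)

lemma map_twist : f twist = 0 := by
  simpa using congrArg f crosscap_add_twist

lemma map_handle : f handle = 2 • f crosscap := by
  have h := congrArg f handle_add_crosscap
  rw [map_add, map_add, map_nsmul, map_twist, add_zero] at h
  rw [← add_right_cancel_iff (a := f crosscap), h]
  module

lemma eq_comp_negEulerChar : f = (zmultiplesHom G (f crosscap)).comp negEulerChar := by
  ext x
  obtain ⟨⟨g, k, ε⟩, rfl⟩ := mk_surjective x
  rw [AddMonoidHom.comp_apply, negEulerChar_mk, zmultiplesHom_apply, mk_eq_nsmul_add, map_add,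
    map_add, map_nsmul, map_nsmul, map_nsmul, map_twist, map_handle]
  module

end NOne

/-- Theorem 3.3: there is an additive monoid homomorphism `φ : 𝒩₁ →+ ℤ` sending the class
of `(g, k, ε)` to `2g + k`, and `φ` is a group completion of `𝒩₁`; in particular the
Grothendieck group of `𝒩₁` is `ℤ`. -/
theorem groupCompletion_NOne_eq_int :
    ∃ φ : NOne →+ ℤ,
      (∀ (g k : ℕ) (ε : ZMod 2),
        φ (nOneCon.mk' (g, k, ε)) = 2 * (g : ℤ) + (k : ℤ)) ∧
      ∀ (G : Type u) [AddCommGroup G] (f : NOne →+ G),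
        ∃! h : ℤ →+ G, h.comp φ = f := by
  refine ⟨NOne.negEulerChar, NOne.negEulerChar_mk, fun G _ f => ?_⟩
  refine ⟨zmultiplesHom G (f NOne.crosscap), (NOne.eq_comp_negEulerChar f).symm, fun h hh => ?_⟩
  refine AddMonoidHom.ext_int ?_
  rw [← hh, AddMonoidHom.comp_apply, NOne.negEulerChar_crosscap, zmultiplesHom_apply, one_zsmul]
end

section
/- Let M be the quotient of the additive commutative monoid ℕ × ℕ × (ZMod 2) (componentwise addition) by the additive monoid congruence generated by the relations (g, k, 0) ∼ (0, 2g + k, 1) for all g ∈ ℕ and all k ≥ 1. Then for every additive commutative group G and every additive monoid homomorphism f : M →+ G, one has (i) f(⟦(g, k, 0)⟧) = f(⟦(g, k, 1)⟧) for all g, k ∈ ℕ, and (ii) f(⟦(g, k, 0)⟧) = f(⟦(0, 2g + k, 0)⟧) for all g, k ∈ ℕ. Equivalently, each of these pairs of elements of M becomes equal in the group completion of M. -/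
universe u

/-! The generating relations `(g, k, 0) ∼ (0, 2g + k, 1)` hold in `G`. Taking `(g, k) = (0, 1)`
gives `F (0,1,0) = F (0,1,0) + F (0,0,1)`, so cancelling in `G` kills the reflected cylinder
`(0,0,1)`, which is (i). Then the relation at `k + 1 ≥ 1` reads
`F (g,k,0) + F (0,1,0) = F (0,2g+k,0) + F (0,1,0)`, and cancelling once more gives (ii)
for every `k`, including `k = 0`. -/

section

variable {G : Type*} [AddCommGroup G] {F : ℕ × ℕ × ZMod 2 →+ G}

theorem map_reflectedCylinder_eq_zero (hF : ∀ a b, nOneRel a b → F a = F b) :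
    F (0, 0, 1) = 0 := by
  have h := hF _ _ ⟨0, 1, le_rfl, rfl, rfl⟩
  rw [show ((0, 2 * 0 + 1, 1) : ℕ × ℕ × ZMod 2) = (0, 1, 0) + (0, 0, 1) from rfl, map_add]
    at h
  exact left_eq_add.mp h

theorem map_boundaryType_eq (hF : ∀ a b, nOneRel a b → F a = F b) (g k : ℕ) :
    F (g, k, 0) = F (g, k, 1) := by
  rw [show ((g, k, 1) : ℕ × ℕ × ZMod 2) = (g, k, 0) + (0, 0, 1) from rfl, map_add,
    map_reflectedCylinder_eq_zero hF, add_zero]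

theorem map_eq_map_genus_zero (hF : ∀ a b, nOneRel a b → F a = F b) (g k : ℕ) :
    F (g, k, 0) = F (0, 2 * g + k, 0) := by
  have h : F (g, k + 1, 0) = F (0, 2 * g + (k + 1), 0) := by
    rw [hF _ _ ⟨g, k + 1, Nat.le_add_left 1 k, rfl, rfl⟩, map_boundaryType_eq hF]
  rw [show ((g, k + 1, 0) : ℕ × ℕ × ZMod 2) = (g, k, 0) + (0, 1, 0) from rfl,
    show ((0, 2 * g + (k + 1), 0) : ℕ × ℕ × ZMod 2) = (0, 2 * g + k, 0) + (0, 1, 0) from rfl,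
    map_add, map_add] at h
  exact add_right_cancel h

end

theorem AddMonoidHom.map_mk'_eq_of_nOneRel {M : Type*} [AddMonoid M] (f : NOne →+ M)
    (a b : ℕ × ℕ × ZMod 2) (h : nOneRel a b) : f (nOneCon.mk' a) = f (nOneCon.mk' b) :=
  congrArg f (nOneCon.eq.mpr (AddConGen.Rel.of a b h))

/-- Relations (i) and (ii) from the proof of Theorem 3.3: any additive monoid homomorphism
from `𝒩₁` to an abelian group identifies `⟦(g,k,0)⟧` with `⟦(g,k,1)⟧` and with
`⟦(0,2g+k,0)⟧`; equivalently these become equal in the group completion of `𝒩₁`. -/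
theorem NOne_relations_in_group_completion :
    ∀ (G : Type u) [AddCommGroup G] (f : NOne →+ G) (g k : ℕ),
      f (nOneCon.mk' (g, k, (0 : ZMod 2))) = f (nOneCon.mk' (g, k, (1 : ZMod 2))) ∧
      f (nOneCon.mk' (g, k, (0 : ZMod 2))) = f (nOneCon.mk' (0, 2 * g + k, (0 : ZMod 2))) := by
  intro G _ f g k
  have hF : ∀ a b, nOneRel a b → f.comp nOneCon.mk' a = f.comp nOneCon.mk' b :=
    f.map_mk'_eq_of_nOneRel
  exact ⟨map_boundaryType_eq hF g k, map_eq_map_genus_zero hF g k⟩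
end

section
/- Let M′ be the quotient of the additive commutative monoid ℕ × (ZMod 2) (componentwise addition) by the additive monoid congruence generated by the relations (k, 0) ∼ (k, 1) for all k ≥ 1. Then there is a well-defined additive monoid homomorphism φ : M′ →+ ℤ sending the class of (k, ε) to k, and φ is a group completion of M′: for every additive commutative group G and every additive monoid homomorphism f : M′ →+ G there exists a unique additive group homomorphism h : ℤ →+ G with h ∘ φ = f. -/
universe u

/-- The relation `(k, 0) ∼ (k, 1)` for `k ≥ 1` on `ℕ × ZMod 2`. -/
def nOneMinusRel : (ℕ × ZMod 2) → (ℕ × ZMod 2) → Prop := fun a b =>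
  ∃ k : ℕ, 1 ≤ k ∧ a = (k, (0 : ZMod 2)) ∧ b = (k, (1 : ZMod 2))

/-- The additive monoid congruence on `ℕ × ZMod 2` generated by `nOneMinusRel`. -/
def nOneMinusCon : AddCon (ℕ × ZMod 2) := addConGen nOneMinusRel

/-- The monoid `𝒩₁⁻` of the paper: the quotient of `ℕ × ZMod 2` by the congruence
generated by `(k, 0) ∼ (k, 1)` for `k ≥ 1`. -/
def NOneMinus : Type := nOneMinusCon.Quotient

noncomputable instance : AddCommMonoid NOneMinus := by
  unfold NOneMinus; infer_instance

/-! Every class is `k • [(1, 0)] + [(0, ε)]`, and `[(0, 1)]` is killed by any hom to a cancellative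
monoid because adding it to `[(1, 0)]` changes nothing. So a hom `f` to a group is
`y ↦ φ y • f [(1, 0)]`, and since `φ [(1, 0)] = 1` it factors uniquely through `φ`. -/

theorem AddMonoidHom.existsUnique_comp_eq_of_map_eq_one {M G : Type*} [AddZeroClass M] [AddGroup G]
    (φ : M →+ ℤ) {x : M} (hx : φ x = 1) (f : M →+ G) (hf : ∀ m, f m = φ m • f x) :
    ∃! h : ℤ →+ G, h.comp φ = f := by
  refine ⟨zmultiplesHom G (f x), ?_, fun h hh => AddMonoidHom.ext_int ?_⟩
  · ext m
    simp [hf m]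
  · rw [zmultiplesHom_apply, one_zsmul, ← hh, AddMonoidHom.comp_apply, hx]

namespace NOneMinus

def mk : ℕ × ZMod 2 →+ NOneMinus := nOneMinusCon.mk'

lemma mk_surjective : Function.Surjective mk := AddCon.mk'_surjective

lemma mk_one (ε : ZMod 2) : mk (1, ε) = mk (1, 0) := by
  fin_cases ε
  · rfl
  · exact (nOneMinusCon.eq.mpr (AddConGen.Rel.of _ _ ⟨1, le_rfl, rfl, rfl⟩)).symm

lemma mk_eq_nsmul_add (k : ℕ) (ε : ZMod 2) : mk (k, ε) = k • mk (1, 0) + mk (0, ε) := by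
  rw [← map_nsmul, ← map_add]
  simp

lemma map_mk_zero {G : Type*} [AddMonoid G] [IsRightCancelAdd G] (f : NOneMinus →+ G)
    (ε : ZMod 2) : f (mk (0, ε)) = 0 := by
  -- cancel `f (mk (1, 0))` from `(0, ε) + (1, 0) = (1, ε) ∼ (1, 0)`
  rw [← add_eq_right (b := f (mk (1, 0))), ← map_add, ← map_add, ← mk_one ε]
  simp

lemma map_mk {G : Type*} [AddMonoid G] [IsRightCancelAdd G] (f : NOneMinus →+ G)
    (k : ℕ) (ε : ZMod 2) : f (mk (k, ε)) = k • f (mk (1, 0)) := by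
  rw [mk_eq_nsmul_add, map_add, map_nsmul, map_mk_zero, add_zero]

/-- The number of crosscaps `k` of the class of `(k, ε)`. -/
def toInt : NOneMinus →+ ℤ :=
  nOneMinusCon.lift ((Nat.castAddMonoidHom ℤ).comp (AddMonoidHom.fst ℕ (ZMod 2))) <|
    AddCon.addConGen_le.mpr <| by
      rintro _ _ ⟨k, -, rfl, rfl⟩
      rfl

@[simp]
lemma toInt_mk (k : ℕ) (ε : ZMod 2) : toInt (mk (k, ε)) = k := AddCon.lift_mk' _ _

lemma map_eq_toInt_zsmul {G : Type*} [AddGroup G] (f : NOneMinus →+ G) (y : NOneMinus) :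
    f y = toInt y • f (mk (1, 0)) := by
  obtain ⟨⟨k, ε⟩, rfl⟩ := mk_surjective y
  rw [map_mk, toInt_mk, natCast_zsmul]

end NOneMinus

/-- Proposition 3.4 (second half): there is an additive monoid homomorphism
`φ : 𝒩₁⁻ →+ ℤ` sending the class of `(k, ε)` to `k`, and `φ` is a group completion
of `𝒩₁⁻`. -/
theorem groupCompletion_NOneMinus_eq_int :
    ∃ φ : NOneMinus →+ ℤ,
      (∀ (k : ℕ) (ε : ZMod 2), φ (nOneMinusCon.mk' (k, ε)) = (k : ℤ)) ∧
      ∀ (G : Type u) [AddCommGroup G] (f : NOneMinus →+ G),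
        ∃! h : ℤ →+ G, h.comp φ = f :=
  ⟨NOneMinus.toInt, NOneMinus.toInt_mk, fun _ _ f =>
    NOneMinus.toInt.existsUnique_comp_eq_of_map_eq_one (NOneMinus.toInt_mk 1 0) f
      (NOneMinus.map_eq_toInt_zsmul f)⟩
end
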